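/- arXiv:1409.4794 — 4 statements merged into one kernel-verified Lean document; each statement's English description precedes it below -/
import Mathlib

section
/- Let K ∈ ℕ, K ≥ 1, let f₁, …, f_K : ℂ → ℂ be entire functions of order at most 1, and let α₁, …, α_K ∈ ℂ be pairwise distinct. If ∑_{j=1}^{K} f_j(ξ)·exp(α_j·ξ²) = 0 for all ξ ∈ ℂ, then f₁ = f₂ = … = f_K = 0 identically. -/
/-!
Choose a direction `exp (ψ I)` in which the numbers `Re (α j * exp (ψ I))` are pairwise distinct
and let `j` maximise them. Dividing the relation by `exp (α j ξ²)` writes `f j` as a combination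
of the other `f i` with factors `exp ((α i - α j) ξ²)`, which decay like `exp (-δ |ξ|²)` on a thin
double sector of half-opening `η` around the direction `exp (ψ I / 2)`; since the `f i` have order
at most one, `f j` is bounded there. In the two complementary sectors, of opening `π - 2η`, the
substitution `ξ = exp w` turns Phragmén–Lindelöf into its horizontal-strip form, which applies to
functions of order `< π / (π - 2η)`. So `f j` is bounded on `ℂ`, constant by Liouville, and zero
by its decay along the sector; induction on the number of terms finishes the proof.
-/

open Complex Filter Topology Set
open scoped Real

def HasOrderAtMostOne (f : ℂ → ℂ) : Prop :=
  ∀ ε : ℝ, 0 < ε → ∃ C : ℝ, 0 < C ∧ ∀ z : ℂ, ‖f z‖ ≤ C * Real.exp (‖z‖ ^ (1 + ε))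

theorem countable_setOf_re_mul_exp_eq_zero {β : ℂ} (hβ : β ≠ 0) :
    {ψ : ℝ | (β * exp (ψ * I)).re = 0}.Countable := by
  refine (countable_range fun k : ℤ => (2 * k + 1) * π / 2 - arg β).mono fun ψ hψ => ?_
  have hre : (β * exp (ψ * I)).re = ‖β‖ * Real.cos (arg β + ψ) := by
    conv_lhs => rw [← norm_mul_exp_arg_mul_I β]
    rw [mul_assoc, ← exp_add, ← add_mul, ← ofReal_add, re_ofReal_mul, exp_ofReal_mul_I_re]
  obtain ⟨k, hk⟩ := Real.cos_eq_zero_iff.1 <|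
    (mul_eq_zero.1 (hre.symm.trans hψ)).resolve_left (norm_ne_zero_iff.2 hβ)
  exact ⟨k, by linarith⟩

theorem exists_injOn_re_mul_exp {ι : Type*} {s : Finset ι} {α : ι → ℂ} (hα : InjOn α s) :
    ∃ ψ : ℝ, InjOn (fun i => (α i * exp (ψ * I)).re) s := by
  classical
  set bad := ⋃ p ∈ s.offDiag, {ψ : ℝ | ((α p.1 - α p.2) * exp (ψ * I)).re = 0}
  have hbad : bad.Countable := s.offDiag.countable_toSet.biUnion fun p hp => by
    obtain ⟨h1, h2, hne⟩ := Finset.mem_offDiag.1 hp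
    exact countable_setOf_re_mul_exp_eq_zero (sub_ne_zero.2 fun h => hne (hα h1 h2 h))
  obtain ⟨ψ, hψ⟩ := (hbad.dense_compl ℝ).nonempty
  refine ⟨ψ, fun i hi j hj hij => by_contra fun hne => hψ ?_⟩
  refine mem_biUnion (x := (i, j)) (Finset.mem_offDiag.2 ⟨hi, hj, hne⟩) ?_
  simp only [mem_ofPred_eq, sub_mul, sub_re]
  exact sub_eq_zero.2 hij

theorem exists_pos_eventually_re_mul_exp_lt {ι : Type*} {s : Finset ι} {β : ι → ℂ} {ψ : ℝ}
    (hβ : ∀ i ∈ s, (β i * exp (ψ * I)).re < 0) :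
    ∃ δ > 0, ∀ᶠ t : ℝ in 𝓝 ψ, ∀ i ∈ s, (β i * exp (t * I)).re < -δ := by
  have hδ : ∀ᶠ δ in 𝓝 (0 : ℝ), ∀ i ∈ s, (β i * exp (ψ * I)).re < -δ :=
    (eventually_all_finset s).2 fun i hi =>
      (continuous_neg.tendsto' 0 0 neg_zero).eventually (lt_mem_nhds (hβ i hi))
  obtain ⟨δ, hδψ, hδ⟩ := ((hδ.filter_mono nhdsWithin_le_nhds).and
    (self_mem_nhdsWithin : Ioi (0 : ℝ) ∈ 𝓝[>] 0)).exists
  refine ⟨δ, hδ, (eventually_all_finset s).2 fun i hi => ?_⟩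
  have hcont : Continuous fun t : ℝ => (β i * exp (t * I)).re := by fun_prop
  exact (hcont.tendsto ψ).eventually (gt_mem_nhds (hδψ i hi))

theorem tendsto_rpow_sub_mul_sq_atTop {ρ δ : ℝ} (hρ : ρ < 2) (hδ : 0 < δ) :
    Tendsto (fun x : ℝ => x ^ ρ - δ * x ^ 2) atTop atBot := by
  have hlim : Tendsto (fun x : ℝ => x ^ (ρ - 2) - δ) atTop (𝓝 (0 - δ)) := by
    refine (?_ : Tendsto (fun x : ℝ => x ^ (ρ - 2)) atTop (𝓝 0)).sub_const δ
    simpa using tendsto_rpow_neg_atTop (by linarith : 0 < -(ρ - 2))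
  refine ((tendsto_pow_atTop two_ne_zero).atTop_mul_neg (by linarith) hlim).congr' ?_
  filter_upwards [eventually_gt_atTop 0] with x hx
  rw [mul_sub, ← Real.rpow_natCast, ← Real.rpow_add hx]
  norm_num
  ring

theorem exists_forall_rpow_sub_mul_sq_le {ρ δ : ℝ} (hρ₀ : 0 ≤ ρ) (hρ : ρ < 2) (hδ : 0 < δ) :
    ∃ M, ∀ x : ℝ, 0 ≤ x → x ^ ρ - δ * x ^ 2 ≤ M := by
  obtain ⟨R, hR⟩ := eventually_atTop.1 ((tendsto_rpow_sub_mul_sq_atTop hρ hδ).eventually_le_atBot 0)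
  refine ⟨max 0 (R ^ ρ), fun x hx => ?_⟩
  rcases le_total R x with hRx | hxR
  · exact (hR x hRx).trans (le_max_left _ _)
  · have : x ^ ρ ≤ R ^ ρ := Real.rpow_le_rpow hx hxR hρ₀
    nlinarith [le_max_right 0 (R ^ ρ), sq_nonneg x]

theorem norm_comp_exp_le_of_horizontal_strip {g : ℂ → ℂ} (hg : Differentiable ℂ g) {C ρ a b M : ℝ}
    (hρ : 0 ≤ ρ) (hρab : ρ < π / (b - a)) (hgrowth : ∀ z, ‖g z‖ ≤ C * Real.exp (‖z‖ ^ ρ))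
    (ha : ∀ w : ℂ, w.im = a → ‖g (exp w)‖ ≤ M) (hb : ∀ w : ℂ, w.im = b → ‖g (exp w)‖ ≤ M)
    {z : ℂ} (hza : a ≤ z.im) (hzb : z.im ≤ b) : ‖g (exp z)‖ ≤ M := by
  have hC : 0 ≤ C := nonneg_of_mul_nonneg_left ((norm_nonneg _).trans (hgrowth 0)) (Real.exp_pos _)
  refine PhragmenLindelof.horizontal_strip (f := g ∘ exp) (hg.comp differentiable_exp).diffContOnCl
    ⟨ρ, hρab, 1, .of_bound C (.of_forall fun w => ?_)⟩ ha hb hza hzb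
  have hexp : ‖exp w‖ ^ ρ ≤ Real.exp (ρ * |w.re|) := by
    rw [norm_exp, ← Real.exp_mul, mul_comm]
    exact Real.exp_le_exp.2 (mul_le_mul_of_nonneg_left (le_abs_self _) hρ)
  calc ‖g (exp w)‖ ≤ C * Real.exp (‖exp w‖ ^ ρ) := hgrowth _
    _ ≤ C * ‖Real.exp (1 * Real.exp (ρ * |w.re|))‖ := by
      rw [one_mul, Real.norm_of_nonneg (Real.exp_pos _).le]; gcongr

theorem exists_exp_eq_of_im_mem {ξ : ℂ} (hξ : ξ ≠ 0) (t₀ : ℝ) :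
    ∃ w : ℂ, exp w = ξ ∧ t₀ - π < w.im ∧ w.im ≤ t₀ + π := by
  have hrot : exp (-t₀ * I) * ξ ≠ 0 := mul_ne_zero (exp_ne_zero _) hξ
  refine ⟨log (exp (-t₀ * I) * ξ) + t₀ * I, ?_, ?_, ?_⟩
  · rw [exp_add, exp_log hrot, mul_comm, ← mul_assoc, ← exp_add]; simp
  all_goals simp only [add_im, log_im, mul_I_im, ofReal_re]
  · linarith [neg_pi_lt_arg (exp (-t₀ * I) * ξ)]
  · linarith [arg_le_pi (exp (-t₀ * I) * ξ)]

theorem norm_le_of_norm_le_on_double_sector {g : ℂ → ℂ} (hg : Differentiable ℂ g)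
    {C ρ η M t₀ : ℝ} (hρ : 0 ≤ ρ) (hη : 0 ≤ η) (hρη : ρ < π / (π - 2 * η))
    (hgrowth : ∀ z, ‖g z‖ ≤ C * Real.exp (‖z‖ ^ ρ))
    (hsector : ∀ r t : ℝ, |t - t₀| ≤ η → ‖g (r * exp (t * I))‖ ≤ M) (ξ : ℂ) :
    ‖g ξ‖ ≤ M := by
  have hray : ∀ w : ℂ, |w.im - t₀| ≤ η ∨ |w.im - π - t₀| ≤ η ∨ |w.im + π - t₀| ≤ η →
      ‖g (exp w)‖ ≤ M := by
    intro w hw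
    rw [← re_add_im w, exp_add, ← ofReal_exp]
    rcases hw with hw | hw | hw
    · exact hsector _ _ hw
    · have : exp (w.im * I) = -exp ((w.im - π : ℝ) * I) := by
        rw [ofReal_sub, sub_mul, exp_sub, exp_pi_mul_I, div_neg, div_one, neg_neg]
      rw [this, mul_neg, ← neg_mul, ← ofReal_neg]
      exact hsector _ _ hw
    · have : exp (w.im * I) = -exp ((w.im + π : ℝ) * I) := by
        rw [ofReal_add, add_mul, exp_add, exp_pi_mul_I, mul_neg_one, neg_neg]
      rw [this, mul_neg, ← neg_mul, ← ofReal_neg]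
      exact hsector _ _ hw
  have hwidth : ∀ a b : ℝ, b - a = π - 2 * η → ρ < π / (b - a) := fun a b h => h ▸ hρη
  rcases eq_or_ne ξ 0 with rfl | hξ
  · simpa using hsector 0 t₀ (by simpa using hη)
  obtain ⟨w, rfl, hw_lo, hw_hi⟩ := exists_exp_eq_of_im_mem hξ t₀
  rcases le_total w.im (t₀ - π + η) with h₁ | h₁
  · exact hray w (.inr (.inr (abs_le.2 ⟨by linarith, by linarith⟩)))
  rcases le_total w.im (t₀ - η) with h₂ | h₂
  · refine norm_comp_exp_le_of_horizontal_strip hg hρ (hwidth _ _ (by ring)) hgrowth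
      (fun v hv => hray v (.inr (.inr ?_))) (fun v hv => hray v (.inl ?_)) h₁ h₂ <;>
    exact abs_le.2 ⟨by linarith, by linarith⟩
  rcases le_total w.im (t₀ + η) with h₃ | h₃
  · exact hray w (.inl (abs_le.2 ⟨by linarith, by linarith⟩))
  rcases le_total w.im (t₀ + π - η) with h₄ | h₄
  · refine norm_comp_exp_le_of_horizontal_strip hg hρ (hwidth _ _ (by ring)) hgrowth
      (fun v hv => hray v (.inl ?_)) (fun v hv => hray v (.inr (.inl ?_))) h₃ h₄ <;>
    exact abs_le.2 ⟨by linarith, by linarith⟩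
  · exact hray w (.inr (.inl (abs_le.2 ⟨by linarith, by linarith⟩)))

theorem exists_re_mul_sq_le_on_double_sector {ι : Type*} {s : Finset ι} {β : ι → ℂ} {ψ : ℝ}
    (hβ : ∀ i ∈ s, (β i * exp (ψ * I)).re < 0) :
    ∃ δ > 0, ∃ η > 0, η ≤ π / 8 ∧ ∀ r t : ℝ, |t - ψ / 2| ≤ η → ∀ i ∈ s,
      (β i * ((r : ℂ) * exp (t * I)) ^ 2).re ≤ -δ * ‖(r : ℂ) * exp (t * I)‖ ^ 2 := by
  obtain ⟨δ, hδ, hev⟩ := exists_pos_eventually_re_mul_exp_lt hβ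
  have hev2 : ∀ᶠ t : ℝ in 𝓝 (ψ / 2), ∀ i ∈ s, (β i * exp ((2 * t : ℝ) * I)).re < -δ :=
    ((continuous_const_mul 2).tendsto' (ψ / 2) ψ (by ring)).eventually hev
  obtain ⟨η₀, hη₀, hball⟩ := Metric.eventually_nhds_iff.1 hev2
  refine ⟨δ, hδ, min (η₀ / 2) (π / 8), lt_min (half_pos hη₀) (by positivity), min_le_right _ _,
    fun r t ht i hi => ?_⟩
  have hsq : ((r : ℂ) * exp (t * I)) ^ 2 = ((r ^ 2 : ℝ) : ℂ) * exp ((2 * t : ℝ) * I) := by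
    rw [mul_pow, ← exp_nat_mul]; push_cast; ring_nf
  have hlt := hball (y := t) (by rw [Real.dist_eq]; linarith [min_le_left (η₀ / 2) (π / 8)]) i hi
  rw [hsq, mul_left_comm, re_ofReal_mul, norm_mul, norm_exp_ofReal_mul_I, mul_one, norm_real,
    Real.norm_eq_abs, sq_abs]
  nlinarith [sq_nonneg r]

theorem norm_sum_mul_exp_le {ι : Type*} {s : Finset ι} {f : ι → ℂ → ℂ} {β : ι → ℂ} {C : ι → ℝ}
    {ρ δ : ℝ} {ξ : ℂ} (hf : ∀ i ∈ s, ‖f i ξ‖ ≤ C i * Real.exp (‖ξ‖ ^ ρ))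
    (hβ : ∀ i ∈ s, (β i * ξ ^ 2).re ≤ -δ * ‖ξ‖ ^ 2) :
    ‖∑ i ∈ s, f i ξ * exp (β i * ξ ^ 2)‖ ≤ (∑ i ∈ s, C i) * Real.exp (‖ξ‖ ^ ρ - δ * ‖ξ‖ ^ 2) := by
  rw [Finset.sum_mul]
  refine (norm_sum_le _ _).trans (Finset.sum_le_sum fun i hi => ?_)
  rw [norm_mul, norm_exp, sub_eq_add_neg, Real.exp_add, ← mul_assoc, ← neg_mul]
  exact mul_le_mul (hf i hi) (Real.exp_le_exp.2 (hβ i hi)) (Real.exp_pos _).le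
    ((norm_nonneg _).trans (hf i hi))

theorem eq_zero_of_add_sum_mul_exp_sq_eq_zero {ι : Type*} {s : Finset ι} {g : ℂ → ℂ}
    {f : ι → ℂ → ℂ} {β : ι → ℂ} {ψ : ℝ} (hg : Differentiable ℂ g) (hg_order : HasOrderAtMostOne g)
    (hf_order : ∀ i ∈ s, HasOrderAtMostOne (f i)) (hβ : ∀ i ∈ s, (β i * exp (ψ * I)).re < 0)
    (h : ∀ ξ, g ξ + ∑ i ∈ s, f i ξ * exp (β i * ξ ^ 2) = 0) : g = 0 := by
  obtain ⟨δ, hδ, η, hη, hηπ, hsector⟩ := exists_re_mul_sq_le_on_double_sector hβ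
  -- `1 + ε` lies strictly between `1` and `π / (π - 2η)`, and `η ≤ π / 8` keeps the latter
  -- below `2`, so that the Gaussian decay beats the growth of the `f i`.
  set ε := (π / (π - 2 * η) - 1) / 2 with hε_def
  have hwide : 1 < π / (π - 2 * η) := by rw [one_lt_div (by linarith)]; linarith
  have hnarrow : π / (π - 2 * η) < 2 := by rw [div_lt_iff₀ (by linarith)]; linarith
  have hε : 0 < ε := by linarith
  have hρ_lt_two : 1 + ε < 2 := by linarith
  have hρη : 1 + ε < π / (π - 2 * η) := by linarith
  obtain ⟨Cg, -, hCg⟩ := hg_order ε hε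
  choose! C hC₀ hC using fun i hi => hf_order i hi ε hε
  have hdecay : ∀ r t : ℝ, |t - ψ / 2| ≤ η → ‖g (r * exp (t * I))‖ ≤
      (∑ i ∈ s, C i) * Real.exp (‖(r : ℂ) * exp (t * I)‖ ^ (1 + ε) -
        δ * ‖(r : ℂ) * exp (t * I)‖ ^ 2) := by
    intro r t ht
    rw [eq_neg_of_add_eq_zero_left (h _), norm_neg]
    exact norm_sum_mul_exp_le (fun i hi => hC i hi _) (hsector r t ht)
  obtain ⟨M, hM⟩ := exists_forall_rpow_sub_mul_sq_le (by linarith) hρ_lt_two hδ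
  have hbdd : ∀ ξ, ‖g ξ‖ ≤ (∑ i ∈ s, C i) * Real.exp M := by
    refine norm_le_of_norm_le_on_double_sector hg (by linarith) hη.le hρη hCg
      fun r t ht => (hdecay r t ht).trans ?_
    gcongr
    · exact Finset.sum_nonneg fun i hi => (hC₀ i hi).le
    · exact hM _ (norm_nonneg _)
  have hconst : ∀ ξ, g ξ = g 0 := fun ξ => hg.apply_eq_apply_of_bounded
    (isBounded_iff_forall_norm_le.2 ⟨_, forall_mem_range.2 hbdd⟩) ξ 0
  have hlim : Tendsto (fun r : ℝ => (∑ i ∈ s, C i) * Real.exp (r ^ (1 + ε) - δ * r ^ 2)) atTop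
      (𝓝 ((∑ i ∈ s, C i) * 0)) :=
    (Real.tendsto_exp_atBot.comp (tendsto_rpow_sub_mul_sq_atTop hρ_lt_two hδ)).const_mul _
  have hg0 : ‖g 0‖ ≤ 0 := by
    refine ge_of_tendsto (by simpa using hlim) ?_
    filter_upwards [eventually_ge_atTop 0] with r hr
    have := hdecay r (ψ / 2) (by simpa using hη.le)
    rwa [hconst, norm_mul, norm_exp_ofReal_mul_I, mul_one, norm_real, Real.norm_of_nonneg hr]
      at this
  funext ξ
  rw [hconst, Pi.zero_apply, ← norm_le_zero_iff]
  exact hg0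

theorem eq_zero_of_sum_mul_exp_sq_eq_zero {ι : Type*} (s : Finset ι) {f : ι → ℂ → ℂ}
    (hdiff : ∀ i ∈ s, Differentiable ℂ (f i)) (horder : ∀ i ∈ s, HasOrderAtMostOne (f i))
    {α : ι → ℂ} (hα : InjOn α s) (hsum : ∀ ξ, ∑ i ∈ s, f i ξ * exp (α i * ξ ^ 2) = 0) :
    ∀ i ∈ s, f i = 0 := by
  classical
  induction s using Finset.strongInduction with
  | H s ih =>
  intro i hi
  obtain ⟨ψ, hψ⟩ := exists_injOn_re_mul_exp hα
  obtain ⟨j, hj, hj_max⟩ := s.exists_max_image (fun i => (α i * exp (ψ * I)).re) ⟨i, hi⟩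
  have hfj : f j = 0 := by
    refine eq_zero_of_add_sum_mul_exp_sq_eq_zero (s := s.erase j) (β := fun i => α i - α j) (ψ := ψ)
      (hdiff j hj) (horder j hj) (fun i hi => horder i (Finset.mem_of_mem_erase hi))
      (fun i hi => ?_) fun ξ => ?_
    · rw [sub_mul, sub_re, sub_neg]
      exact (hj_max i (Finset.mem_of_mem_erase hi)).lt_of_ne fun h =>
        Finset.ne_of_mem_erase hi (hψ (Finset.mem_of_mem_erase hi) hj h)
    · calc f j ξ + ∑ i ∈ s.erase j, f i ξ * exp ((α i - α j) * ξ ^ 2)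
          = (∑ i ∈ s, f i ξ * exp (α i * ξ ^ 2)) * exp (-(α j * ξ ^ 2)) := by
            rw [← Finset.add_sum_erase _ _ hj, add_mul, Finset.sum_mul, mul_assoc, ← exp_add,
              add_neg_cancel, exp_zero, mul_one]
            congr 1
            refine Finset.sum_congr rfl fun i _ => ?_
            rw [mul_assoc, ← exp_add]
            ring_nf
        _ = 0 := by rw [hsum, zero_mul]
  rcases eq_or_ne i j with rfl | hij
  · exact hfj
  refine ih _ (Finset.erase_ssubset hj) (fun i hi => hdiff i (Finset.mem_of_mem_erase hi))
    (fun i hi => horder i (Finset.mem_of_mem_erase hi)) (hα.mono (Finset.erase_subset j s))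
    (fun ξ => ?_) i (Finset.mem_erase.2 ⟨hij, hi⟩)
  simpa [← Finset.add_sum_erase _ _ hj, hfj] using hsum ξ

theorem linear_independence_fresnel_factors_general
    (K : ℕ) (f : Fin K → ℂ → ℂ)
    (hdiff : ∀ j, Differentiable ℂ (f j))
    (horder : ∀ j, ∀ ε : ℝ, 0 < ε → ∃ C : ℝ, 0 < C ∧
      ∀ z : ℂ, ‖f j z‖ ≤ C * Real.exp (‖z‖ ^ (1 + ε)))
    (α : Fin K → ℂ) (hα : Function.Injective α)
    (hsum : ∀ ξ : ℂ, ∑ j : Fin K, f j ξ * Complex.exp (α j * ξ ^ 2) = 0) :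
    ∀ j, f j = 0 := fun j =>
  eq_zero_of_sum_mul_exp_sq_eq_zero Finset.univ (fun j _ => hdiff j) (fun j _ => horder j)
    hα.injOn hsum j (Finset.mem_univ j)

/-- **Linear independence of Fresnel factors** (Lemma 2 of the paper): if entire functions
`f j` of order at most 1 satisfy `∑ j, f j ξ · exp (α j · ξ²) = 0` for pairwise distinct
`α j`, then all `f j` vanish identically. -/
theorem linear_independence_fresnel_factors
    (K : ℕ) (hK : 1 ≤ K) (f : Fin K → ℂ → ℂ)
    (hdiff : ∀ j, Differentiable ℂ (f j))
    (horder : ∀ j, ∀ ε : ℝ, 0 < ε → ∃ C : ℝ, 0 < C ∧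
      ∀ z : ℂ, ‖f j z‖ ≤ C * Real.exp (‖z‖ ^ (1 + ε)))
    (α : Fin K → ℂ) (hα : Function.Injective α)
    (hsum : ∀ ξ : ℂ, ∑ j : Fin K, f j ξ * Complex.exp (α j * ξ ^ 2) = 0) :
    ∀ j, f j = 0 :=
  linear_independence_fresnel_factors_general K f hdiff horder α hα hsum
end

section
/- Let K ∈ ℕ, K ≥ 1, and let α₁, …, α_K ∈ ℂ be pairwise distinct. Let j₀ ∈ {1, …, K} be an index with |α_{j₀}| ≥ |α_j| for all j, and assume α_{j₀} ≠ 0; write φ for the argument of α_{j₀} (so α_{j₀} = |α_{j₀}|·e^{iφ}). Then there exists ε > 0 such that for all j ≠ j₀ and all r ∈ ℝ, setting ξ = r·exp(−iφ/2), one has |exp(α_j·ξ²)| ≤ exp(−2ε·r²)·|exp(α_{j₀}·ξ²)|. -/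
/-!
Rotating by `exp (-iφ/2)` turns `α j ξ²` into `r² · α j e^{-iφ}`, so
`|exp (α j ξ²)| = exp (r² Re (α j e^{-iφ}))`. For `j₀` this real part is `|α j₀|`; for `j ≠ j₀` it
is strictly smaller, since `Re w ≤ |w| = |α j| ≤ |α j₀|` with equality only if `α j e^{-iφ} = |α j₀|`,
i.e. `α j = α j₀`. Finitely many strict gaps give a uniform `ε`.
-/

open Complex ComplexOrder

namespace Complex

lemma mul_ofReal_mul_exp_neg_half_sq (a : ℂ) (r φ : ℝ) :
    a * ((r : ℂ) * exp (-I * (φ : ℂ) / 2)) ^ 2 = ((r ^ 2 : ℝ) : ℂ) * (a * exp (-(φ * I))) := by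
  rw [mul_pow, ← exp_nat_mul]
  push_cast
  ring_nf

lemma norm_exp_mul_ofReal_mul_exp_neg_half_sq (a : ℂ) (r φ : ℝ) :
    ‖exp (a * ((r : ℂ) * exp (-I * (φ : ℂ) / 2)) ^ 2)‖ =
      Real.exp (r ^ 2 * (a * exp (-(φ * I))).re) := by
  rw [mul_ofReal_mul_exp_neg_half_sq, norm_exp, re_ofReal_mul]

lemma mul_exp_neg_arg_mul_I (b : ℂ) : b * exp (-(arg b * I)) = ‖b‖ := by
  calc b * exp (-(arg b * I)) = ‖b‖ * exp (arg b * I) * exp (-(arg b * I)) := by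
        rw [norm_mul_exp_arg_mul_I]
    _ = ‖b‖ := by rw [mul_assoc, ← exp_add, add_neg_cancel, exp_zero, mul_one]

lemma re_mul_exp_neg_arg_lt_norm {a b : ℂ} (hab : ‖a‖ ≤ ‖b‖) (hne : a ≠ b) :
    (a * exp (-(arg b * I))).re < ‖b‖ := by
  set w := a * exp (-(arg b * I))
  have hw : ‖w‖ = ‖a‖ := by simp [w, norm_exp]
  refine (re_le_norm w).trans (hw ▸ hab) |>.lt_of_ne fun hre => hne ?_
  have hnorm : ‖w‖ = ‖b‖ := le_antisymm (hw ▸ hab) (hre ▸ re_le_norm w)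
  have hw_eq : w = ‖b‖ := hnorm ▸ eq_coe_norm_of_nonneg (re_eq_norm.1 (hre.trans hnorm.symm))
  calc a = w * exp (arg b * I) := by rw [mul_assoc, ← exp_add, neg_add_cancel, exp_zero, mul_one]
    _ = b := by rw [hw_eq, norm_mul_exp_arg_mul_I]

end Complex

lemma Finite.exists_pos_le_of_pos_of_ne {ι : Type*} [Finite ι] {g : ι → ℝ} (i₀ : ι)
    (hg : ∀ i, i ≠ i₀ → 0 < g i) : ∃ ε > 0, ∀ i, i ≠ i₀ → ε ≤ g i := by
  classical
  have : Nonempty ι := ⟨i₀⟩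
  let h i := if i = i₀ then 1 else g i
  have hpos : ∀ i, 0 < h i := fun i => by unfold h; split_ifs with hi; exacts [one_pos, hg i hi]
  obtain ⟨m, hm⟩ := Finite.exists_min h
  exact ⟨h m, hpos m, fun i hi => (hm i).trans_eq (if_neg hi)⟩

theorem fresnel_diagonal_domination_general
    (K : ℕ) (α : Fin K → ℂ) (hinj : Function.Injective α)
    (j₀ : Fin K) (hmax : ∀ j, ‖α j‖ ≤ ‖α j₀‖) :
    ∃ ε : ℝ, 0 < ε ∧ ∀ j : Fin K, j ≠ j₀ → ∀ r : ℝ,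
      ‖Complex.exp (α j * ((r : ℂ) * Complex.exp (-Complex.I * ((α j₀).arg : ℂ) / 2)) ^ 2)‖
        ≤ Real.exp (-2 * ε * r ^ 2) *
          ‖Complex.exp (α j₀ * ((r : ℂ) * Complex.exp (-Complex.I * ((α j₀).arg : ℂ) / 2)) ^ 2)‖ := by
  obtain ⟨m, hm, hgap⟩ := Finite.exists_pos_le_of_pos_of_ne
    (g := fun j => ‖α j₀‖ - (α j * exp (-((α j₀).arg * I))).re) j₀
    fun j hj => sub_pos.2 (re_mul_exp_neg_arg_lt_norm (hmax j) (hinj.ne hj))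
  refine ⟨m / 2, half_pos hm, fun j hj r => ?_⟩
  rw [norm_exp_mul_ofReal_mul_exp_neg_half_sq, norm_exp_mul_ofReal_mul_exp_neg_half_sq,
    mul_exp_neg_arg_mul_I, ofReal_re, ← Real.exp_add, Real.exp_le_exp]
  nlinarith [hgap j hj, sq_nonneg r]

/-- **Super-exponential domination along the diagonal** (estimate in the proof of Lemma 2
of the paper): for pairwise distinct `α j` with `|α j₀|` maximal and `α j₀ ≠ 0`, with
`φ = arg (α j₀)`, there is `ε > 0` such that along `ξ = r·exp(−iφ/2)` each
`|exp(α j ξ²)|`, `j ≠ j₀`, is dominated by `exp(−2εr²)·|exp(α j₀ ξ²)|`. -/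
theorem fresnel_diagonal_domination
    (K : ℕ) (hK : 1 ≤ K) (α : Fin K → ℂ) (hinj : Function.Injective α)
    (j₀ : Fin K) (hmax : ∀ j, ‖α j‖ ≤ ‖α j₀‖)
    (hne : α j₀ ≠ 0) :
    ∃ ε : ℝ, 0 < ε ∧ ∀ j : Fin K, j ≠ j₀ → ∀ r : ℝ,
      ‖Complex.exp (α j * ((r : ℂ) * Complex.exp (-Complex.I * ((α j₀).arg : ℂ) / 2)) ^ 2)‖
        ≤ Real.exp (-2 * ε * r ^ 2) *
          ‖Complex.exp (α j₀ * ((r : ℂ) * Complex.exp (-Complex.I * ((α j₀).arg : ℂ) / 2)) ^ 2)‖ :=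
  fresnel_diagonal_domination_general K α hinj j₀ hmax
end

section
/- Let a, ã, b : ℂ → ℂ be entire functions of order at most 1 with b not identically zero, let α ∈ ℂ with Im α ≠ 0, and let s ∈ {0, 1}. If for all z ∈ ℂ one has b*(z)·(a(z) − ã(z))·exp(conj(α)·z²) + b(z)·(a*(z) − ã*(z))·exp(α·z²) + s·(a*(z)·a(z) − ã*(z)·ã(z)) = 0, then a = ã identically. -/
/-!
A Borel-type argument. Write the identity as `F e^{ᾱz²} + G e^{αz²} + K = 0` with
`F = b*·(a - ã)`, `G = b·(a - ã)*`, and assume `Im α > 0` (otherwise swap the roles of `F` and `G`).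
Near the direction `arg z = π/4` (mod `π`) both `e^{(α - ᾱ)z²}` and `e^{-ᾱz²}` decay like
`e^{-c|z|²}`, so `F = -(G e^{(α - ᾱ)z²} + K e^{-ᾱz²})` is bounded on these rays, the growth of `G`
and `K` being of order `1 < 2`. Phragmén–Lindelöf in the sectors of opening `< π` between such rays
makes `F` bounded, hence constant by Liouville, hence zero by its decay along a ray. Entire
functions form an integral domain and `b ≢ 0`, so `a = ã`.
-/

open Complex ComplexConjugate Filter Topology
open scoped Real

/-- Equivalent to order at most one; the constant inside the exponential makes the class closed
under products. -/
def OrderAtMostOne (f : ℂ → ℂ) : Prop :=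
  ∀ ε : ℝ, 0 < ε → ∃ C : ℝ, 0 < C ∧ ∀ z, ‖f z‖ ≤ C * Real.exp (C * ‖z‖ ^ (1 + ε))

def schwarzReflection (f : ℂ → ℂ) : ℂ → ℂ := conj ∘ f ∘ conj

@[simp]
lemma schwarzReflection_apply (f : ℂ → ℂ) (z : ℂ) :
    schwarzReflection f z = conj (f (conj z)) := rfl

lemma schwarzReflection_eq_zero_iff {f : ℂ → ℂ} : schwarzReflection f = 0 ↔ f = 0 := by
  refine ⟨fun h => funext fun z => ?_, fun h => by ext; simp [h]⟩
  simpa using congr_fun h (conj z)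

lemma Differentiable.schwarzReflection {f : ℂ → ℂ} (hf : Differentiable ℂ f) :
    Differentiable ℂ (schwarzReflection f) :=
  fun _ => differentiableAt_conj_conj_iff.2 (hf _)

lemma Differentiable.eq_zero_or_eq_zero_of_mul_eq_zero {f g : ℂ → ℂ} (hf : Differentiable ℂ f)
    (hg : Differentiable ℂ g) (hfg : f * g = 0) : f = 0 ∨ g = 0 := by
  simpa [funext_iff] using AnalyticOnNhd.eq_zero_or_eq_zero_of_mul_eq_zero
    (analyticOnNhd_univ_iff_differentiable.2 hf) (analyticOnNhd_univ_iff_differentiable.2 hg)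
    (fun z _ => congr_fun hfg z) isPreconnected_univ

lemma mul_exp_mul_le_mul_exp_mul {C D x : ℝ} (hC : 0 ≤ C) (hCD : C ≤ D) (hx : 0 ≤ x) :
    C * Real.exp (C * x) ≤ D * Real.exp (D * x) := by
  have := hC.trans hCD
  gcongr

namespace OrderAtMostOne

lemma of_norm_le {f : ℂ → ℂ} (h : ∀ ε : ℝ, 0 < ε → ∃ C : ℝ, 0 < C ∧
    ∀ z : ℂ, ‖f z‖ ≤ C * Real.exp (‖z‖ ^ (1 + ε))) : OrderAtMostOne f := by
  intro ε hε
  obtain ⟨C, hC, hf⟩ := h ε hε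
  refine ⟨C + 1, by positivity, fun z => (hf z).trans ?_⟩
  have := Real.rpow_nonneg (norm_nonneg z) (1 + ε)
  gcongr
  · linarith
  · exact le_mul_of_one_le_left this (by linarith)

lemma const (s : ℂ) : OrderAtMostOne fun _ => s := by
  refine fun ε _ => ⟨‖s‖ + 1, by positivity, fun z => ?_⟩
  have := Real.one_le_exp (by positivity : 0 ≤ (‖s‖ + 1) * ‖z‖ ^ (1 + ε))
  nlinarith [norm_nonneg s]

lemma mul {f g : ℂ → ℂ} (hf : OrderAtMostOne f) (hg : OrderAtMostOne g) :
    OrderAtMostOne (f * g) := by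
  intro ε hε
  obtain ⟨C₁, hC₁, hf⟩ := hf ε hε
  obtain ⟨C₂, hC₂, hg⟩ := hg ε hε
  refine ⟨C₁ * C₂ + C₁ + C₂, by positivity, fun z => ?_⟩
  have hx := Real.rpow_nonneg (norm_nonneg z) (1 + ε)
  calc ‖(f * g) z‖ = ‖f z‖ * ‖g z‖ := norm_mul _ _
    _ ≤ C₁ * Real.exp (C₁ * ‖z‖ ^ (1 + ε)) * (C₂ * Real.exp (C₂ * ‖z‖ ^ (1 + ε))) :=
      mul_le_mul (hf z) (hg z) (norm_nonneg _) (by positivity)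
    _ = C₁ * C₂ * Real.exp ((C₁ + C₂) * ‖z‖ ^ (1 + ε)) := by
      rw [add_mul, Real.exp_add]; ring
    _ ≤ _ := mul_le_mul (by linarith)
      (Real.exp_le_exp.2 (mul_le_mul_of_nonneg_right (by nlinarith) hx)) (by positivity)
      (by positivity)

lemma sub {f g : ℂ → ℂ} (hf : OrderAtMostOne f) (hg : OrderAtMostOne g) :
    OrderAtMostOne (f - g) := by
  intro ε hε
  obtain ⟨C₁, hC₁, hf⟩ := hf ε hε
  obtain ⟨C₂, hC₂, hg⟩ := hg ε hε
  refine ⟨C₁ + C₂, by positivity, fun z => ?_⟩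
  have hx := Real.rpow_nonneg (norm_nonneg z) (1 + ε)
  calc ‖(f - g) z‖ ≤ ‖f z‖ + ‖g z‖ := norm_sub_le _ _
    _ ≤ C₁ * Real.exp (C₁ * ‖z‖ ^ (1 + ε)) + C₂ * Real.exp (C₂ * ‖z‖ ^ (1 + ε)) :=
      add_le_add (hf z) (hg z)
    _ ≤ C₁ * Real.exp ((C₁ + C₂) * ‖z‖ ^ (1 + ε))
        + C₂ * Real.exp ((C₁ + C₂) * ‖z‖ ^ (1 + ε)) := by
      gcongr <;> linarith
    _ = _ := by ring

lemma schwarzReflection {f : ℂ → ℂ} (hf : OrderAtMostOne f) :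
    OrderAtMostOne (schwarzReflection f) := by
  intro ε hε
  obtain ⟨C, hC, hf⟩ := hf ε hε
  exact ⟨C, hC, fun z => by simpa using hf (conj z)⟩

lemma exists_common_bound {f g : ℂ → ℂ} (hf : OrderAtMostOne f) (hg : OrderAtMostOne g) {ε : ℝ}
    (hε : 0 < ε) : ∃ C : ℝ, 0 < C ∧ ∀ z, ‖f z‖ ≤ C * Real.exp (C * ‖z‖ ^ (1 + ε)) ∧
      ‖g z‖ ≤ C * Real.exp (C * ‖z‖ ^ (1 + ε)) := by
  obtain ⟨C₁, hC₁, hf⟩ := hf ε hε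
  obtain ⟨C₂, hC₂, hg⟩ := hg ε hε
  refine ⟨C₁ + C₂, by positivity, fun z => ⟨(hf z).trans ?_, (hg z).trans ?_⟩⟩ <;>
    exact mul_exp_mul_le_mul_exp_mul (by positivity) (by linarith)
      (Real.rpow_nonneg (norm_nonneg z) _)

end OrderAtMostOne

lemma tendsto_mul_rpow_sub_mul_sq_atBot {C c p : ℝ} (hc : 0 < c) (hp : p < 2) :
    Tendsto (fun r : ℝ => C * r ^ p - c * r ^ 2) atTop atBot := by
  have hlim : Tendsto (fun r : ℝ => C * r ^ (-(2 - p)) - c) atTop (𝓝 (C * 0 - c)) :=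
    ((tendsto_rpow_neg_atTop (by linarith)).const_mul C).sub_const c
  rw [mul_zero, zero_sub] at hlim
  refine ((tendsto_pow_atTop two_ne_zero).atTop_mul_neg (neg_lt_zero.2 hc) hlim).congr' ?_
  filter_upwards [eventually_gt_atTop 0] with r hr
  rw [mul_sub, ← mul_assoc, mul_comm (r ^ 2) C, mul_assoc, ← Real.rpow_natCast,
    ← Real.rpow_add hr]
  norm_num [mul_comm]

lemma exists_mul_rpow_sub_mul_sq_le {C c p : ℝ} (hC : 0 ≤ C) (hc : 0 < c) (hp₀ : 0 ≤ p)
    (hp : p < 2) : ∃ K, ∀ r : ℝ, 0 ≤ r → C * r ^ p - c * r ^ 2 ≤ K := by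
  obtain ⟨R, hR⟩ := eventually_atTop.1
    ((tendsto_mul_rpow_sub_mul_sq_atBot (C := C) hc hp).eventually_le_atBot 0)
  refine ⟨max 0 (C * R ^ p), fun r hr => ?_⟩
  rcases le_total R r with hRr | hrR
  · exact (hR r hRr).trans (le_max_left _ _)
  · refine le_max_of_le_right ?_
    have : r ^ p ≤ R ^ p := Real.rpow_le_rpow hr hrR hp₀
    nlinarith [mul_le_mul_of_nonneg_left this hC, sq_nonneg r]

lemma Differentiable.eq_zero_of_norm_le_of_tendsto {f : ℂ → ℂ} (hf : Differentiable ℂ f) {M : ℝ}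
    (hM : ∀ z, z ≠ 0 → ‖f z‖ ≤ M) {l : Filter ℂ} [l.NeBot] (hl : Tendsto f l (𝓝 0)) : f = 0 := by
  have hconst : ∀ z, f z = f 0 := fun z => hf.apply_eq_apply_of_bounded
    (isBounded_iff_forall_norm_le.2 ⟨max M ‖f 0‖, by
      rintro _ ⟨z, rfl⟩
      rcases eq_or_ne z 0 with rfl | hz
      · exact le_max_right _ _
      · exact le_max_of_le_left (hM z hz)⟩) z 0
  exact funext fun z => (hconst z).trans (tendsto_const_nhds_iff.1 (hl.congr hconst))

lemma norm_comp_exp_le_of_le_on_boundary {f : ℂ → ℂ} (hf : Differentiable ℂ f) {a b p C M : ℝ}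
    (hp : 0 ≤ p) (hpab : p < π / (b - a))
    (hgrowth : ∀ z, ‖f z‖ ≤ C * Real.exp (C * ‖z‖ ^ p))
    (ha : ∀ w : ℂ, w.im = a → ‖f (exp w)‖ ≤ M) (hb : ∀ w : ℂ, w.im = b → ‖f (exp w)‖ ≤ M)
    {w : ℂ} (hwa : a ≤ w.im) (hwb : w.im ≤ b) : ‖f (exp w)‖ ≤ M := by
  have hC : 0 ≤ C := nonneg_of_mul_nonneg_left ((norm_nonneg _).trans (hgrowth 0)) (Real.exp_pos _)
  refine PhragmenLindelof.horizontal_strip (f := fun w => f (exp w))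
    (hf.comp differentiable_exp).diffContOnCl
    ⟨p, hpab, C, Asymptotics.IsBigO.of_bound C (Eventually.of_forall fun w => ?_)⟩ ha hb hwa hwb
  rw [Real.norm_eq_abs, Real.abs_exp]
  refine (hgrowth _).trans ?_
  rw [norm_exp, ← Real.exp_mul, mul_comm w.re]
  gcongr
  exact le_abs_self _

lemma norm_le_of_le_on_rays {f : ℂ → ℂ} (hf : Differentiable ℂ f) {θ₁ θ₂ p C M : ℝ}
    (hp : 0 ≤ p) (hp₁ : p < π / (θ₂ - θ₁)) (hp₂ : p < π / (θ₁ + π - θ₂))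
    (hgrowth : ∀ z, ‖f z‖ ≤ C * Real.exp (C * ‖z‖ ^ p))
    (hray : ∀ (k : ℤ) (w : ℂ), w.im = θ₁ + k * π ∨ w.im = θ₂ + k * π → ‖f (exp w)‖ ≤ M)
    {z : ℂ} (hz : z ≠ 0) : ‖f z‖ ≤ M := by
  set k := toIcoDiv Real.pi_pos θ₁ (log z).im
  have hk := sub_toIcoDiv_zsmul_mem_Ico Real.pi_pos θ₁ (log z).im
  rw [zsmul_eq_mul, Set.mem_Ico] at hk
  rw [← exp_log hz]
  rcases le_total (log z).im (θ₂ + k * π) with h | h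
  · refine norm_comp_exp_le_of_le_on_boundary hf (a := θ₁ + k * π) hp (by simpa using hp₁) hgrowth
      (fun w hw => hray k w (.inl hw)) (fun w hw => hray k w (.inr hw)) (by linarith) h
  · refine norm_comp_exp_le_of_le_on_boundary hf (a := θ₂ + k * π) (b := θ₁ + (k + 1 : ℤ) * π)
      hp (hp₂.trans_eq (by push_cast; ring_nf)) hgrowth (fun w hw => hray k w (.inr hw))
      (fun w hw => hray (k + 1) w (.inl hw)) h (by push_cast; linarith)

lemma exp_sq_eq_mul_exp (w : ℂ) :
    exp w ^ 2 = ((‖exp w‖ ^ 2 : ℝ) : ℂ) * exp ((2 * w.im : ℝ) * I) := by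
  conv_lhs => rw [← re_add_im w]
  rw [← exp_nat_mul, norm_exp, ← Real.exp_nat_mul, ofReal_exp, ← exp_add]
  push_cast
  ring_nf

lemma exp_two_mul_add_int_mul_pi (θ : ℝ) (k : ℤ) :
    exp ((2 * (θ + k * π) : ℝ) * I) = exp ((2 * θ : ℝ) * I) := by
  rw [show ((2 * (θ + k * π) : ℝ) : ℂ) * I = (2 * θ : ℝ) * I + k * (2 * π * I) by push_cast; ring,
    exp_add, exp_int_mul_two_pi_mul_I, mul_one]

/-- For `z ^ 2 = ‖z‖ ^ 2 * ζ`, the factors `exp ((α - conj α) * z ^ 2)` and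
`exp (-(conj α * z ^ 2))` are then at most `exp (-(c * ‖z‖ ^ 2))`. -/
def IsDecayDirection (α : ℂ) (c : ℝ) (ζ : ℂ) : Prop :=
  c ≤ 2 * α.im * ζ.im ∧ c ≤ (conj α * ζ).re

lemma eventually_isDecayDirection {α : ℂ} (hα : 0 < α.im) :
    ∀ᶠ θ : ℝ in 𝓝 (π / 4), IsDecayDirection α (α.im / 2) (exp ((2 * θ : ℝ) * I)) := by
  have hI : Tendsto (fun θ : ℝ => exp ((2 * θ : ℝ) * I)) (𝓝 (π / 4)) (𝓝 I) := by
    have h : exp ((2 * (π / 4) : ℝ) * I) = I := by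
      convert exp_pi_div_two_mul_I using 2; push_cast; ring
    simpa only [h] using
      (by fun_prop : Continuous fun θ : ℝ => exp ((2 * θ : ℝ) * I)).tendsto (π / 4)
  refine (((continuous_im.tendsto I).comp hI).const_mul (2 * α.im)).eventually_const_le ?_
    |>.and (((continuous_re.tendsto _).comp (hI.const_mul (conj α))).eventually_const_le ?_)
  · simp; linarith
  · simp; linarith

lemma norm_le_of_isDecayDirection {F G K : ℂ → ℂ} {α z ζ : ℂ} {B c : ℝ}
    (h : F z * exp (conj α * z ^ 2) + G z * exp (α * z ^ 2) + K z = 0)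
    (hG : ‖G z‖ ≤ B) (hK : ‖K z‖ ≤ B) (hζ : IsDecayDirection α c ζ)
    (hz : z ^ 2 = ((‖z‖ ^ 2 : ℝ) : ℂ) * ζ) :
    ‖F z‖ ≤ 2 * B * Real.exp (-(c * ‖z‖ ^ 2)) := by
  have hF : F z = -(G z * exp ((α - conj α) * z ^ 2)) - K z * exp (-(conj α * z ^ 2)) := by
    have he := exp_ne_zero (conj α * z ^ 2)
    apply mul_right_cancel₀ he
    rw [sub_mul α, exp_sub, exp_neg, sub_mul, neg_mul, mul_assoc, mul_assoc, div_mul_cancel₀ _ he,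
      inv_mul_cancel₀ he, mul_one]
    linear_combination h
  have hre₁ : ((α - conj α) * z ^ 2).re ≤ -(c * ‖z‖ ^ 2) := by
    rw [hz]
    simp only [sub_mul, sub_re, mul_re, mul_im, conj_re, conj_im, ofReal_re, ofReal_im]
    nlinarith [hζ.1, sq_nonneg ‖z‖]
  have hre₂ : (-(conj α * z ^ 2)).re ≤ -(c * ‖z‖ ^ 2) := by
    rw [hz, mul_left_comm, neg_re, re_ofReal_mul]
    nlinarith [hζ.2, sq_nonneg ‖z‖]
  have hB : 0 ≤ B := (norm_nonneg _).trans hG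
  calc ‖F z‖ ≤ ‖G z‖ * Real.exp ((α - conj α) * z ^ 2).re
        + ‖K z‖ * Real.exp (-(conj α * z ^ 2)).re := by
        rw [hF]; refine (norm_sub_le _ _).trans ?_; simp [norm_exp]
    _ ≤ B * Real.exp (-(c * ‖z‖ ^ 2)) + B * Real.exp (-(c * ‖z‖ ^ 2)) := by gcongr
    _ = 2 * B * Real.exp (-(c * ‖z‖ ^ 2)) := by ring

lemma norm_comp_exp_le_of_isDecayDirection {F G K : ℂ → ℂ} {α : ℂ} {C c p : ℝ}
    (h : ∀ z, F z * exp (conj α * z ^ 2) + G z * exp (α * z ^ 2) + K z = 0)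
    (hG : ∀ z, ‖G z‖ ≤ C * Real.exp (C * ‖z‖ ^ p)) (hK : ∀ z, ‖K z‖ ≤ C * Real.exp (C * ‖z‖ ^ p))
    {w : ℂ} (hw : IsDecayDirection α c (exp ((2 * w.im : ℝ) * I))) :
    ‖F (exp w)‖ ≤ 2 * C * Real.exp (C * ‖exp w‖ ^ p - c * ‖exp w‖ ^ 2) := by
  refine (norm_le_of_isDecayDirection (h _) (hG _) (hK _) hw (exp_sq_eq_mul_exp w)).trans_eq ?_
  rw [sub_eq_add_neg, Real.exp_add]
  ring

theorem eq_zero_of_mul_exp_conj_add_mul_exp_add_eq_zero {F G K : ℂ → ℂ} (hF : Differentiable ℂ F)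
    (hFo : OrderAtMostOne F) (hGo : OrderAtMostOne G) (hKo : OrderAtMostOne K) {α : ℂ}
    (hα : 0 < α.im) (h : ∀ z, F z * exp (conj α * z ^ 2) + G z * exp (α * z ^ 2) + K z = 0) :
    F = 0 := by
  obtain ⟨η, hη, hdir⟩ := Metric.eventually_nhds_iff.1 (eventually_isDecayDirection hα)
  -- The sectors between the decay rays at `π / 4 ± η'` (mod `π`) have opening at most `π - 2η'`.
  set η' := min (η / 2) (π / 4)
  have hη'₀ : 0 < η' := lt_min (half_pos hη) (by positivity)
  have hη'η : η' < η := (min_le_left _ _).trans_lt (half_lt_self hη)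
  have hη'π : η' ≤ π / 4 := min_le_right _ _
  obtain ⟨p, hp₁, hp₂⟩ : ∃ p, 1 < p ∧ p < min 2 (π / (π - 2 * η')) :=
    exists_between (lt_min one_lt_two ((one_lt_div (by linarith [Real.pi_pos])).2 (by linarith)))
  have hp2 : p < 2 := hp₂.trans_le (min_le_left _ _)
  obtain ⟨CF, -, hFb⟩ := hFo (p - 1) (by linarith)
  obtain ⟨C, hC, hGK⟩ := hGo.exists_common_bound hKo (ε := p - 1) (by linarith)
  simp only [add_sub_cancel] at hFb hGK
  have hray : ∀ (w : ℂ) (k : ℤ), dist (w.im - k * π) (π / 4) < η →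
      ‖F (exp w)‖ ≤ 2 * C * Real.exp (C * ‖exp w‖ ^ p - α.im / 2 * ‖exp w‖ ^ 2) :=
    fun w k hw => norm_comp_exp_le_of_isDecayDirection h (fun z => (hGK z).1) (fun z => (hGK z).2)
      (by rw [← sub_add_cancel w.im (k * π), exp_two_mul_add_int_mul_pi]; exact hdir hw)
  obtain ⟨M, hM⟩ := exists_mul_rpow_sub_mul_sq_le hC.le (half_pos hα) (by linarith) hp2
  have hbdd : ∀ z, z ≠ 0 → ‖F z‖ ≤ 2 * C * Real.exp M := by
    refine fun z hz => norm_le_of_le_on_rays hF (θ₁ := π / 4 - η') (θ₂ := π / 4 + η')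
      (by linarith) ?_ ?_ hFb (fun k w hw => (hray w k ?_).trans ?_) hz
    · calc p < π / (π - 2 * η') := hp₂.trans_le (min_le_right _ _)
        _ ≤ π / (2 * η') := div_le_div_of_nonneg_left Real.pi_pos.le (by positivity) (by linarith)
        _ = π / (π / 4 + η' - (π / 4 - η')) := by ring_nf
    · exact (hp₂.trans_le (min_le_right _ _)).trans_eq (by ring_nf)
    · rcases hw with hw | hw <;> rw [hw, add_sub_cancel_right, Real.dist_eq] <;>
        simp [abs_of_pos hη'₀, hη'η]
    · gcongr
      exact hM _ (norm_nonneg _)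
  refine hF.eq_zero_of_norm_le_of_tendsto hbdd
    (l := map (fun x : ℝ => exp (x + π / 4 * I)) atTop) (tendsto_map'_iff.2 ?_)
  refine squeeze_zero_norm (fun x => ?_) (by simpa using ((Real.tendsto_exp_atBot.comp
    ((tendsto_mul_rpow_sub_mul_sq_atBot (C := C) (half_pos hα) hp2).comp
      Real.tendsto_exp_atTop)).const_mul (2 * C)))
  simpa [norm_exp] using hray (x + π / 4 * I) 0 (by simpa using hη)

theorem eq_zero_or_eq_zero_of_mul_exp_conj_add_mul_exp_add_eq_zero {F G K : ℂ → ℂ}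
    (hF : Differentiable ℂ F) (hG : Differentiable ℂ G) (hFo : OrderAtMostOne F)
    (hGo : OrderAtMostOne G) (hKo : OrderAtMostOne K) {α : ℂ} (hα : α.im ≠ 0)
    (h : ∀ z, F z * exp (conj α * z ^ 2) + G z * exp (α * z ^ 2) + K z = 0) :
    F = 0 ∨ G = 0 := by
  rcases hα.lt_or_gt with hα | hα
  · refine .inr (eq_zero_of_mul_exp_conj_add_mul_exp_add_eq_zero hG hGo hFo hKo (α := conj α)
      (by simpa using hα) fun z => ?_)
    rw [conj_conj]
    linear_combination h z
  · exact .inl (eq_zero_of_mul_exp_conj_add_mul_exp_add_eq_zero hF hFo hGo hKo hα h)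

theorem key_identity_implies_equal_general
    (a a' b : ℂ → ℂ)
    (ha : Differentiable ℂ a) (ha' : Differentiable ℂ a') (hb : Differentiable ℂ b)
    (haord : ∀ ε : ℝ, 0 < ε → ∃ C : ℝ, 0 < C ∧
      ∀ z : ℂ, ‖a z‖ ≤ C * Real.exp (‖z‖ ^ (1 + ε)))
    (ha'ord : ∀ ε : ℝ, 0 < ε → ∃ C : ℝ, 0 < C ∧
      ∀ z : ℂ, ‖a' z‖ ≤ C * Real.exp (‖z‖ ^ (1 + ε)))
    (hbord : ∀ ε : ℝ, 0 < ε → ∃ C : ℝ, 0 < C ∧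
      ∀ z : ℂ, ‖b z‖ ≤ C * Real.exp (‖z‖ ^ (1 + ε)))
    (hbne : b ≠ 0)
    (α : ℂ) (hα : α.im ≠ 0)
    (s : ℂ)
    (heq : ∀ z : ℂ,
      (starRingEnd ℂ) (b ((starRingEnd ℂ) z)) * (a z - a' z) * Complex.exp ((starRingEnd ℂ) α * z ^ 2)
      + b z * ((starRingEnd ℂ) (a ((starRingEnd ℂ) z)) - (starRingEnd ℂ) (a' ((starRingEnd ℂ) z)))
          * Complex.exp (α * z ^ 2)
      + s * ((starRingEnd ℂ) (a ((starRingEnd ℂ) z)) * a z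
          - (starRingEnd ℂ) (a' ((starRingEnd ℂ) z)) * a' z) = 0) :
    a = a' := by
  have hd : Differentiable ℂ (a - a') := ha.sub ha'
  have hao := OrderAtMostOne.of_norm_le haord
  have ha'o := OrderAtMostOne.of_norm_le ha'ord
  have hbo := OrderAtMostOne.of_norm_le hbord
  have hK : OrderAtMostOne fun z => s * (conj (a (conj z)) * a z - conj (a' (conj z)) * a' z) :=
    (OrderAtMostOne.const s).mul
      ((hao.schwarzReflection.mul hao).sub (ha'o.schwarzReflection.mul ha'o))
  rcases eq_zero_or_eq_zero_of_mul_exp_conj_add_mul_exp_add_eq_zero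
      (hb.schwarzReflection.mul hd) (hb.mul hd.schwarzReflection)
      (hbo.schwarzReflection.mul (hao.sub ha'o)) (hbo.mul (hao.sub ha'o).schwarzReflection) hK hα
      (fun z => by simpa using heq z) with h | h
  · rcases hb.schwarzReflection.eq_zero_or_eq_zero_of_mul_eq_zero hd h with h | h
    · exact absurd (schwarzReflection_eq_zero_iff.1 h) hbne
    · exact sub_eq_zero.1 h
  · rcases hb.eq_zero_or_eq_zero_of_mul_eq_zero hd.schwarzReflection h with h | h
    · exact absurd h hbne
    · exact sub_eq_zero.1 (schwarzReflection_eq_zero_iff.1 h)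

/-- **Key identity step in the proof of Theorem 1** (equation (20) of the paper): if
entire functions `a, a', b` of order at most 1 with `b ≢ 0` satisfy
`b*·(a − a')·exp(conj α·z²) + b·(a* − a'*)·exp(α·z²) + s·(a*·a − a'*·a') = 0` for a
non-real `α` and `s ∈ {0,1}`, then `a = a'`. Here `f*(z) = conj (f (conj z))` is the
Schwarz reflection. -/
theorem key_identity_implies_equal
    (a a' b : ℂ → ℂ)
    (ha : Differentiable ℂ a) (ha' : Differentiable ℂ a') (hb : Differentiable ℂ b)
    (haord : ∀ ε : ℝ, 0 < ε → ∃ C : ℝ, 0 < C ∧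
      ∀ z : ℂ, ‖a z‖ ≤ C * Real.exp (‖z‖ ^ (1 + ε)))
    (ha'ord : ∀ ε : ℝ, 0 < ε → ∃ C : ℝ, 0 < C ∧
      ∀ z : ℂ, ‖a' z‖ ≤ C * Real.exp (‖z‖ ^ (1 + ε)))
    (hbord : ∀ ε : ℝ, 0 < ε → ∃ C : ℝ, 0 < C ∧
      ∀ z : ℂ, ‖b z‖ ≤ C * Real.exp (‖z‖ ^ (1 + ε)))
    (hbne : b ≠ 0)
    (α : ℂ) (hα : α.im ≠ 0)
    (s : ℂ) (hs : s = 0 ∨ s = 1)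
    (heq : ∀ z : ℂ,
      (starRingEnd ℂ) (b ((starRingEnd ℂ) z)) * (a z - a' z) * Complex.exp ((starRingEnd ℂ) α * z ^ 2)
      + b z * ((starRingEnd ℂ) (a ((starRingEnd ℂ) z)) - (starRingEnd ℂ) (a' ((starRingEnd ℂ) z)))
          * Complex.exp (α * z ^ 2)
      + s * ((starRingEnd ℂ) (a ((starRingEnd ℂ) z)) * a z
          - (starRingEnd ℂ) (a' ((starRingEnd ℂ) z)) * a' z) = 0) :
    a = a' :=
  key_identity_implies_equal_general a a' b ha ha' hb haord ha'ord hbord hbne α hα s heq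
end

section
/- Let h : ℝ → ℂ be integrable with compact support, and suppose that its Fourier transform 𝓕h vanishes on some nonempty open set U ⊆ ℝ, i.e. 𝓕h(ξ) = 0 for all ξ ∈ U. Then h = 0 almost everywhere. -/
/-!
Because `h` has compact support, `z ↦ ∫ exp(-2πixz) h(x) dx` converges for every complex `z`
and, by differentiation under the integral sign, is an entire extension of `𝓕h`. An entire
function vanishing on a nonempty open set of reals vanishes identically, so `𝓕h = 0`. Pairing
`h` with the Fourier transforms of Schwartz functions, which include all smooth compactly
supported test functions, then shows that `h = 0` almost everywhere.
-/

open MeasureTheory Complex Filter Topology SchwartzMap FourierTransform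

theorem MeasureTheory.Integrable.ae_eq_zero_of_fourier_eq_zero
    {V : Type*} [NormedAddCommGroup V] [InnerProductSpace ℝ V] [FiniteDimensional ℝ V]
    [MeasurableSpace V] [BorelSpace V]
    {E : Type*} [NormedAddCommGroup E] [NormedSpace ℂ E] [CompleteSpace E]
    {f : V → E} (hf : Integrable f) (h𝓕 : 𝓕 f = 0) : f =ᵐ[volume] 0 := by
  refine ae_eq_zero_of_integral_contDiff_smul_eq_zero hf.locallyIntegrable fun g hg hgc ↦ ?_
  let φ : 𝓢(V, ℂ) :=
    (hgc.comp_left (g := Complex.ofRealCLM) (map_zero _)).toSchwartzMap (by fun_prop)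
  let ψ : 𝓢(V, ℂ) := 𝓕⁻ φ
  have hψ : 𝓕 (ψ : V → ℂ) = φ :=
    (fourier_coe ψ).symm.trans (congrArg (⇑) (FourierTransform.fourier_fourierInv_eq φ))
  have parseval := VectorFourier.integral_bilin_fourierIntegral_eq_flip
    (ContinuousLinearMap.lsmul ℂ ℂ).flip Real.continuous_fourierChar continuous_inner hf
    (ψ.integrable (μ := volume)) (L := innerₗ V)
  rw [flip_innerₗ] at parseval
  calc ∫ x, g x • f x
      = ∫ x, (ContinuousLinearMap.lsmul ℂ ℂ).flip (f x) (𝓕 (ψ : V → ℂ) x) := by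
        simp [hψ, φ, Complex.coe_smul]
    _ = ∫ ξ, (ContinuousLinearMap.lsmul ℂ ℂ).flip (𝓕 f ξ) (ψ ξ) := parseval.symm
    _ = 0 := by simp [h𝓕]

theorem Differentiable.eq_zero_of_eqOn_zero_of_isOpen_real
    {E : Type*} [NormedAddCommGroup E] [NormedSpace ℂ E] [CompleteSpace E]
    {F : ℂ → E} (hF : Differentiable ℂ F) {U : Set ℝ} (hU : IsOpen U) (hne : U.Nonempty)
    (hFU : ∀ ξ ∈ U, F ξ = 0) : F = 0 := by
  obtain ⟨ξ₀, hξ₀⟩ := hne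
  have hreal : ∃ᶠ ξ : ℝ in 𝓝[≠] ξ₀, F ξ = 0 :=
    (eventually_nhdsWithin_of_eventually_nhds (eventually_of_mem (hU.mem_nhds hξ₀) hFU)).frequently
  have hofReal : Tendsto ((↑) : ℝ → ℂ) (𝓝[≠] ξ₀) (𝓝[≠] (ξ₀ : ℂ)) :=
    continuous_ofReal.continuousWithinAt.tendsto_nhdsWithin fun _ ↦ ofReal_injective.ne
  have hanalytic : AnalyticOnNhd ℂ F Set.univ := fun z _ ↦ hF.analyticAt z
  funext z
  exact hanalytic.eqOn_zero_of_preconnected_of_frequently_eq_zero isPreconnected_univ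
    (Set.mem_univ _) (hofReal.frequently hreal) (Set.mem_univ z)

section FourierExtension

variable {E : Type*} [NormedAddCommGroup E] [NormedSpace ℂ E]

noncomputable def fourierExtension (f : ℝ → E) (z : ℂ) : E :=
  ∫ x : ℝ, cexp (-2 * Real.pi * I * x * z) • f x

theorem fourierExtension_ofReal (f : ℝ → E) (ξ : ℝ) : fourierExtension f ξ = 𝓕 f ξ := by
  rw [Real.fourier_real_eq_integral_exp_smul, fourierExtension]
  congr with x
  push_cast
  ring_nf

theorem hasDerivAt_cexp_neg_two_pi_I_mul (x : ℝ) (z : ℂ) :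
    HasDerivAt (fun z ↦ cexp (-2 * Real.pi * I * x * z))
      (-2 * Real.pi * I * x * cexp (-2 * Real.pi * I * x * z)) z := by
  simpa [mul_comm] using ((hasDerivAt_id z).const_mul (-2 * Real.pi * I * x)).cexp

theorem norm_cexp_neg_two_pi_I_mul_le {x R : ℝ} (hx : |x| ≤ R) (z : ℂ) :
    ‖cexp (-2 * Real.pi * I * x * z)‖ ≤ Real.exp (2 * Real.pi * R * ‖z‖) := by
  refine (norm_exp_le_exp_norm _).trans (Real.exp_le_exp.mpr ?_)
  have : ‖-2 * Real.pi * I * x * z‖ = 2 * Real.pi * |x| * ‖z‖ := by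
    simp [abs_of_pos Real.pi_pos]
  rw [this]
  gcongr

theorem norm_mul_cexp_neg_two_pi_I_mul_le {x R : ℝ} (hx : |x| ≤ R) (z : ℂ) :
    ‖-2 * Real.pi * I * x * cexp (-2 * Real.pi * I * x * z)‖ ≤
      2 * Real.pi * R * Real.exp (2 * Real.pi * R * ‖z‖) := by
  have hR : 0 ≤ R := (abs_nonneg x).trans hx
  have : ‖(-2 * Real.pi * I * x : ℂ)‖ = 2 * Real.pi * |x| := by simp [abs_of_pos Real.pi_pos]
  rw [norm_mul, this]
  gcongr
  exact norm_cexp_neg_two_pi_I_mul_le hx z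

theorem norm_smul_le_mul_norm_of_support_subset {f : ℝ → E} {R C : ℝ}
    (hf : ∀ x, f x ≠ 0 → |x| ≤ R) {k : ℝ → ℂ} (hk : ∀ x, |x| ≤ R → ‖k x‖ ≤ C) (x : ℝ) :
    ‖k x • f x‖ ≤ C * ‖f x‖ := by
  by_cases hx : f x = 0
  · simp [hx]
  · rw [norm_smul]
    gcongr
    exact hk x (hf x hx)

theorem differentiable_fourierExtension {f : ℝ → E} (hf : Integrable f)
    (hfc : HasCompactSupport f) : Differentiable ℂ (fourierExtension f) := by
  obtain ⟨R, hR0, hR⟩ := hfc.isBounded.subset_closedBall_lt 0 0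
  have hsupp : ∀ x, f x ≠ 0 → |x| ≤ R := fun x hx ↦ by
    simpa using hR (subset_tsupport f hx)
  have hmeas : ∀ z : ℂ, AEStronglyMeasurable (fun x : ℝ ↦ cexp (-2 * Real.pi * I * x * z)) :=
    fun z ↦ (by fun_prop : Continuous _).aestronglyMeasurable
  intro z₀
  have hint : Integrable fun x : ℝ ↦ cexp (-2 * Real.pi * I * x * z₀) • f x :=
    (hf.norm.const_mul _).mono' ((hmeas z₀).smul hf.1) <| .of_forall <|
      norm_smul_le_mul_norm_of_support_subset hsupp fun _ hx ↦
        norm_cexp_neg_two_pi_I_mul_le hx z₀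
  have hbound : ∀ x : ℝ, ∀ z ∈ Metric.ball z₀ 1,
      ‖(-2 * Real.pi * I * x * cexp (-2 * Real.pi * I * x * z)) • f x‖ ≤
        2 * Real.pi * R * Real.exp (2 * Real.pi * R * (‖z₀‖ + 1)) * ‖f x‖ := by
    intro x z hz
    have hz' : ‖z‖ ≤ ‖z₀‖ + 1 := by
      linarith [norm_le_norm_add_norm_sub' z z₀, mem_ball_iff_norm.mp hz]
    refine norm_smul_le_mul_norm_of_support_subset hsupp
      (k := fun y : ℝ ↦ -2 * Real.pi * I * y * cexp (-2 * Real.pi * I * y * z))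
      (fun y hy ↦ (norm_mul_cexp_neg_two_pi_I_mul_le hy z).trans ?_) x
    gcongr
  have hderiv_meas : AEStronglyMeasurable fun x : ℝ ↦
      (-2 * Real.pi * I * x * cexp (-2 * Real.pi * I * x * z₀)) • f x :=
    (by fun_prop : Continuous fun x : ℝ ↦ -2 * Real.pi * I * x *
      cexp (-2 * Real.pi * I * x * z₀)).aestronglyMeasurable.smul hf.1
  exact (hasDerivAt_integral_of_dominated_loc_of_deriv_le (Metric.ball_mem_nhds z₀ one_pos)
    (.of_forall fun z ↦ (hmeas z).smul hf.1) hint hderiv_meas (.of_forall hbound)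
    (hf.norm.const_mul _)
    (.of_forall fun x z _ ↦ (hasDerivAt_cexp_neg_two_pi_I_mul x z).smul_const (f x))).2
    |>.differentiableAt

end FourierExtension

/-- **Fourier transform of a compactly supported integrable function vanishing on an open
set forces the function to vanish** (consequence of Paley–Wiener analyticity, underlying
the restriction to arbitrary open data sets in Theorem 1 of the paper). -/
theorem fourier_vanishing_open_set
    (h : ℝ → ℂ) (hint : Integrable h) (hsupp : HasCompactSupport h)
    (U : Set ℝ) (hU : IsOpen U) (hUne : U.Nonempty)
    (hvanish : ∀ ξ ∈ U, FourierTransform.fourier h ξ = 0) :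
    h =ᵐ[volume] 0 := by
  have hext : fourierExtension h = 0 :=
    (differentiable_fourierExtension hint hsupp).eq_zero_of_eqOn_zero_of_isOpen_real hU hUne
      fun ξ hξ ↦ by rw [fourierExtension_ofReal, hvanish ξ hξ]
  refine hint.ae_eq_zero_of_fourier_eq_zero (funext fun ξ ↦ ?_)
  rw [← fourierExtension_ofReal, hext, Pi.zero_apply, Pi.zero_apply]
end
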